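/- arXiv:1307.1257 — 3 statements merged into one kernel-verified Lean document; each statement's English description precedes it below -/
import Mathlib

section
/- Let D₁ ⊂ D₂ be bounded domains in ℝ^N (N ≥ 2) containing the origin such that the ball B_R(x) of radius R > 0 centered at x is contained in D₂ for every x in the closure of D₁, and assume D₁⁺ is connected. Assume w ∈ C⁰(D₂) ∩ C²(D₂⁺) satisfies Δw = 0 and w ≥ 0 in D₂⁺, and w = 0 on ∂D₂⁺ ∩ {x₁ = 0}. Then there exist constants C > 0 (depending only on N, the diameters of D₁ and D₂, and R) and M ≥ 1 (depending only on N) such that for every z = (z₁, …, z_N) in the closure of D₁⁺ and every x in the closure of D₁⁺ with x₁ ≠ 0: (a) if z₁ > 0 then w(x) ≤ M·C·w(z)/z₁; (b) if z₁ = 0 then w(x) ≤ M·C·(∂w/∂x₁)(z), where (∂w/∂x₁)(z) denotes the one-sided partial derivative of w in the x₁-direction at z, assumed to exist. -/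
open Metric Set
open scoped Pointwise NNReal

/-- The Laplacian: sum of pure second partial derivatives. -/
noncomputable def lapl {N : ℕ} (u : EuclideanSpace ℝ (Fin N) → ℝ)
    (x : EuclideanSpace ℝ (Fin N)) : ℝ :=
  ∑ i : Fin N,
    fderiv ℝ (fun y => fderiv ℝ u y (EuclideanSpace.single i 1)) x (EuclideanSpace.single i 1)

/-- The Lipschitz seminorm `[u]_S = sup { |u x - u y| / |x - y| : x, y ∈ S, x ≠ y }`. -/
noncomputable def lipSemi {N : ℕ} (u : EuclideanSpace ℝ (Fin N) → ℝ)
    (S : Set (EuclideanSpace ℝ (Fin N))) : ℝ :=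
  sSup {r : ℝ | ∃ x ∈ S, ∃ y ∈ S, x ≠ y ∧ r = |u x - u y| / dist x y}

/-- `G` has boundary of class `C^{2,α}`: it is the sublevel set of a `C²` defining function
with `α`-Hölder continuous second derivatives and nonvanishing gradient on the boundary. -/
def C2AlphaBoundary {N : ℕ} (G : Set (EuclideanSpace ℝ (Fin N))) (α : ℝ) : Prop :=
  ∃ (f : EuclideanSpace ℝ (Fin N) → ℝ) (K : ℝ≥0),
    ContDiff ℝ 2 f ∧ HolderWith K α.toNNReal (fderiv ℝ (fderiv ℝ f)) ∧
    G = {x | f x < 0} ∧ frontier G = {x | f x = 0} ∧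
    ∀ x ∈ frontier G, fderiv ℝ f x ≠ 0

/-- `G` has boundary of class `C¹`. -/
def C1Boundary {N : ℕ} (G : Set (EuclideanSpace ℝ (Fin N))) : Prop :=
  ∃ f : EuclideanSpace ℝ (Fin N) → ℝ,
    ContDiff ℝ 1 f ∧ G = {x | f x < 0} ∧ frontier G = {x | f x = 0} ∧
    ∀ x ∈ frontier G, fderiv ℝ f x ≠ 0

/-- `G` has boundary of class `C²`. -/
def C2Boundary {N : ℕ} (G : Set (EuclideanSpace ℝ (Fin N))) : Prop :=
  ∃ f : EuclideanSpace ℝ (Fin N) → ℝ,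
    ContDiff ℝ 2 f ∧ G = {x | f x < 0} ∧ frontier G = {x | f x = 0} ∧
    ∀ x ∈ frontier G, fderiv ℝ f x ≠ 0

/-- Reflection `x^λ = x - 2 (x·ω - λ) ω` of `x` in the hyperplane `π_λ = {x : x·ω = λ}`. -/
noncomputable def reflPt {N : ℕ} (ω : EuclideanSpace ℝ (Fin N)) (lam : ℝ)
    (x : EuclideanSpace ℝ (Fin N)) : EuclideanSpace ℝ (Fin N) :=
  x - (2 * ((inner ℝ x ω : ℝ) - lam)) • ω

/-- The right-hand cap `A_λ = {x ∈ A : x·ω > λ}`. -/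
def rightCap {N : ℕ} (A : Set (EuclideanSpace ℝ (Fin N))) (ω : EuclideanSpace ℝ (Fin N))
    (lam : ℝ) : Set (EuclideanSpace ℝ (Fin N)) :=
  {x ∈ A | lam < (inner ℝ x ω : ℝ)}

/-- The reflected cap `A^λ = {x : x^λ ∈ A_λ}`. -/
noncomputable def reflCap {N : ℕ} (A : Set (EuclideanSpace ℝ (Fin N)))
    (ω : EuclideanSpace ℝ (Fin N)) (lam : ℝ) : Set (EuclideanSpace ℝ (Fin N)) :=
  {x | reflPt ω lam x ∈ rightCap A ω lam}

/-- The critical value `m = inf {μ : G^λ ⊆ G for all λ ∈ (μ, M)}` of the moving plane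
method in the direction `ω`, where `M = sup {x·ω : x ∈ G}`. -/
noncomputable def criticalValue {N : ℕ} (G : Set (EuclideanSpace ℝ (Fin N)))
    (ω : EuclideanSpace ℝ (Fin N)) : ℝ :=
  sInf {μ : ℝ | ∀ lam : ℝ, μ < lam →
    lam < sSup ((fun x => (inner ℝ x ω : ℝ)) '' G) → reflCap G ω lam ⊆ G}

/-- The part of `A` where the `i`-th coordinate is positive. -/
def plusPart {N : ℕ} (i : Fin N) (A : Set (EuclideanSpace ℝ (Fin N))) :
    Set (EuclideanSpace ℝ (Fin N)) :=
  {x ∈ A | 0 < x i}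

/-- `ν` is the exterior unit normal to `A` at the boundary point `x`. -/
def IsExteriorNormalAt {N : ℕ} (A : Set (EuclideanSpace ℝ (Fin N)))
    (x ν : EuclideanSpace ℝ (Fin N)) : Prop :=
  ‖ν‖ = 1 ∧ ∃ ε > 0, ∀ t : ℝ, 0 < t → t < ε → x - t • ν ∈ A ∧ x + t • ν ∉ closure A

/-- The norm `‖u‖_{C²} = max |u| + max |Du| + max |D²u|` over the set `S`. -/
noncomputable def C2NormOn {N : ℕ} (u : EuclideanSpace ℝ (Fin N) → ℝ)
    (S : Set (EuclideanSpace ℝ (Fin N))) : ℝ :=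
  sSup ((fun x => |u x|) '' S) + sSup ((fun x => ‖fderivWithin ℝ u S x‖) '' S) +
    sSup ((fun x => ‖fderivWithin ℝ (fderivWithin ℝ u S) S x‖) '' S)

/-- `G` satisfies a uniform interior ball condition of radius `ρ`: at every boundary point
there is an open ball of radius `ρ` contained in `G` whose closure touches the boundary there. -/
def UniformInteriorBall {N : ℕ} (G : Set (EuclideanSpace ℝ (Fin N))) (ρ : ℝ) : Prop :=
  ∀ p ∈ frontier G, ∃ c : EuclideanSpace ℝ (Fin N), ball c ρ ⊆ G ∧ p ∈ sphere c ρ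

/-!
If `w` vanishes somewhere on the connected component `Ω` of `D₂⁺` containing `D₁⁺`, the strong
maximum principle gives `w = 0` there and everything is trivial. Otherwise `w > 0` on `Ω`, and it
suffices to find `L > 0` with `w z ≥ L z₁` on `closure D₁⁺` and `∂w/∂x₁ ≥ L` on its flat part;
then `C = (max w) / L` works with `M = 1`. Away from the hyperplane this is the positive minimum
`m` of `w` on a compact subset of `Ω`. Near it, with `ρ = R / 3`, the ball of radius `ρ` tangent
to `{x₁ = 0}` above `z` lies in `D₂⁺`, and comparing `w` on the annulus `ρ/2 < |x - c| < ρ` with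
the Hopf barrier `exp (-α |x - c|²) - exp (-α ρ²)`, which is strictly subharmonic there, gives
`w (z + t e₁) ≥ κ m (z₁ + t)` with `κ` depending only on `N` and `ρ`. The same annulus estimate
proves the strong maximum principle: positivity of `w` at the centre of a ball spreads to the
whole ball.
-/

open Filter Topology

section SecondDerivative

variable {E : Type*} [NormedAddCommGroup E] [NormedSpace ℝ E]

theorem ContDiffAt.eventually_differentiableAt {h : E → ℝ} {x : E} (hx : ContDiffAt ℝ 2 h x) :
    ∀ᶠ y in 𝓝 x, DifferentiableAt ℝ h y :=
  (hx.eventually (by simp)).mono fun _ hy => hy.differentiableAt two_ne_zero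

theorem ContDiffAt.differentiableAt_fderiv_apply {h : E → ℝ} {x : E} (hx : ContDiffAt ℝ 2 h x)
    (e : E) : DifferentiableAt ℝ (fun y => fderiv ℝ h y e) x :=
  ((hx.fderiv_right le_rfl).differentiableAt one_ne_zero).clm_apply (differentiableAt_const e)

theorem hasDerivAt_add_smul (x e : E) (t : ℝ) : HasDerivAt (fun t : ℝ => x + t • e) e t := by
  simpa using ((hasDerivAt_id t).smul_const e).const_add x

theorem hasDerivAt_deriv_comp_add_smul {h : E → ℝ} {x : E} (hx : ContDiffAt ℝ 2 h x) (e : E) :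
    HasDerivAt (deriv fun t : ℝ => h (x + t • e)) (fderiv ℝ (fun y => fderiv ℝ h y e) x e) 0 := by
  have hlim : Tendsto (fun t : ℝ => x + t • e) (𝓝 0) (𝓝 x) := by
    simpa using (hasDerivAt_add_smul x e 0).continuousAt.tendsto
  have hderiv : deriv (fun t : ℝ => h (x + t • e)) =ᶠ[𝓝 0] fun t => fderiv ℝ h (x + t • e) e := by
    filter_upwards [hlim.eventually hx.eventually_differentiableAt] with t ht
    exact (ht.hasFDerivAt.comp_hasDerivAt t (hasDerivAt_add_smul x e t)).deriv
  refine HasDerivAt.congr_of_eventuallyEq ?_ hderiv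
  exact (hx.differentiableAt_fderiv_apply e).hasFDerivAt.comp_hasDerivAt_of_eq 0
    (hasDerivAt_add_smul x e 0) (by simp)

theorem fderiv_fderiv_apply_nonpos_of_isLocalMax {h : E → ℝ} {x : E} (hx : ContDiffAt ℝ 2 h x)
    (hmax : IsLocalMax h x) (e : E) : fderiv ℝ (fun y => fderiv ℝ h y e) x e ≤ 0 := by
  set g : ℝ → ℝ := fun t => h (x + t • e)
  have hg2 := hasDerivAt_deriv_comp_add_smul hx e
  have hgmax : IsLocalMax g 0 :=
    IsLocalMax.comp_continuous (by simpa using hmax) (hasDerivAt_add_smul x e 0).continuousAt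
  by_contra! hpos
  -- the second-derivative test makes `0` a local minimum as well, so `g` is locally constant
  have hgmin : IsLocalMin g 0 := isLocalMin_of_deriv_deriv_pos (hg2.deriv ▸ hpos)
    hgmax.deriv_eq_zero
    (hx.continuousAt.comp_of_eq (hasDerivAt_add_smul x e 0).continuousAt (by simp))
  have hconst : g =ᶠ[𝓝 0] fun _ => g 0 := by
    filter_upwards [hgmax, hgmin] with t h1 h2 using le_antisymm h1 h2
  have hderiv : deriv g =ᶠ[𝓝 0] fun _ => 0 :=
    hconst.eventuallyEq_nhds.mono fun t ht => ht.deriv_eq.trans (deriv_const _ _)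
  have := hg2.deriv
  rw [hderiv.deriv_eq, deriv_const] at this
  exact hpos.ne this

end SecondDerivative

theorem le_of_hasDerivWithinAt_Ici_of_mul_le {g : ℝ → ℝ} {a d ε : ℝ}
    (hd : HasDerivWithinAt g d (Ici 0) 0) (hε : 0 < ε) (hg0 : g 0 = 0)
    (hle : ∀ t ∈ Ioo 0 ε, a * t ≤ g t) : a ≤ d := by
  refine ge_of_tendsto ((hasDerivWithinAt_iff_tendsto_slope' (s := Ioi 0) (lt_irrefl 0)).mp
    (hasDerivWithinAt_Ioi_iff_Ici.mpr hd)) ?_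
  filter_upwards [Ioo_mem_nhdsGT hε] with t ht
  rw [slope_def_field, hg0, sub_zero, sub_zero, le_div_iff₀ ht.1]
  exact hle t ht

theorem mul_sub_le_exp_sub_exp {α ρ s : ℝ} (hα : 0 ≤ α) (hρ : 0 ≤ ρ) (hρs : ρ ≤ s) :
    α * s * Real.exp (-α * s ^ 2) * (s - ρ) ≤ Real.exp (-α * ρ ^ 2) - Real.exp (-α * s ^ 2) := by
  have hsplit :
      Real.exp (-α * ρ ^ 2) = Real.exp (-α * s ^ 2) * Real.exp (α * (s ^ 2 - ρ ^ 2)) := by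
    rw [← Real.exp_add]; ring_nf
  have hlin := Real.add_one_le_exp (α * (s ^ 2 - ρ ^ 2))
  have hquad : α * s * (s - ρ) ≤ α * (s ^ 2 - ρ ^ 2) := by
    nlinarith [mul_nonneg (mul_nonneg hα hρ) (sub_nonneg.mpr hρs)]
  rw [hsplit]
  nlinarith [Real.exp_pos (-α * s ^ 2)]

section Laplacian

variable {N : ℕ}

theorem lapl_nonpos_of_isLocalMax {h : EuclideanSpace ℝ (Fin N) → ℝ}
    {x : EuclideanSpace ℝ (Fin N)} (hx : ContDiffAt ℝ 2 h x) (hmax : IsLocalMax h x) :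
    lapl h x ≤ 0 :=
  Finset.sum_nonpos fun _ _ => fderiv_fderiv_apply_nonpos_of_isLocalMax hx hmax _

theorem lapl_sub {f g : EuclideanSpace ℝ (Fin N) → ℝ} {x : EuclideanSpace ℝ (Fin N)}
    (hf : ContDiffAt ℝ 2 f x) (hg : ContDiffAt ℝ 2 g x) :
    lapl (fun y => f y - g y) x = lapl f x - lapl g x := by
  unfold lapl
  rw [← Finset.sum_sub_distrib]
  refine Finset.sum_congr rfl fun j _ => ?_
  set e := EuclideanSpace.single j (1 : ℝ)
  have hsub : (fun y => fderiv ℝ (fun y => f y - g y) y e)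
      =ᶠ[𝓝 x] fun y => fderiv ℝ f y e - fderiv ℝ g y e := by
    filter_upwards [hf.eventually_differentiableAt, hg.eventually_differentiableAt]
      with y hfy hgy
    rw [fderiv_fun_sub hfy hgy]
    rfl
  rw [hsub.fderiv_eq, fderiv_fun_sub (hf.differentiableAt_fderiv_apply e)
    (hg.differentiableAt_fderiv_apply e)]
  rfl

theorem hasFDerivAt_gaussian (α : ℝ) (c y : EuclideanSpace ℝ (Fin N)) :
    HasFDerivAt (fun y => Real.exp (-α * ‖y - c‖ ^ 2))
      (Real.exp (-α * ‖y - c‖ ^ 2) • (-α) • (2 • (innerSL ℝ (y - c)).comp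
        (ContinuousLinearMap.id ℝ (EuclideanSpace ℝ (Fin N))))) y :=
  (((hasFDerivAt_id y).sub_const c).norm_sq.const_mul (-α)).exp

theorem fderiv_gaussian_apply (a α b : ℝ) (c y : EuclideanSpace ℝ (Fin N)) (j : Fin N) :
    fderiv ℝ (fun y => a * Real.exp (-α * ‖y - c‖ ^ 2) + b) y (EuclideanSpace.single j 1)
      = -2 * α * a * (y j - c j) * Real.exp (-α * ‖y - c‖ ^ 2) := by
  rw [(((hasFDerivAt_gaussian α c y).const_mul a).add_const b).fderiv]
  simp [EuclideanSpace.inner_single_right]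
  ring

theorem lapl_gaussian (a α b : ℝ) (c x : EuclideanSpace ℝ (Fin N)) :
    lapl (fun y => a * Real.exp (-α * ‖y - c‖ ^ 2) + b) x
      = a * (4 * α ^ 2 * ‖x - c‖ ^ 2 - 2 * α * N) * Real.exp (-α * ‖x - c‖ ^ 2) := by
  unfold lapl
  simp only [fderiv_gaussian_apply]
  have hterm : ∀ j : Fin N, fderiv ℝ (fun y : EuclideanSpace ℝ (Fin N) =>
      -2 * α * a * (y j - c j) * Real.exp (-α * ‖y - c‖ ^ 2)) x (EuclideanSpace.single j 1)
      = a * (4 * α ^ 2 * (x j - c j) ^ 2 - 2 * α) * Real.exp (-α * ‖x - c‖ ^ 2) := by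
    intro j
    have hproj : HasFDerivAt (fun y : EuclideanSpace ℝ (Fin N) => y j)
        (EuclideanSpace.proj j : EuclideanSpace ℝ (Fin N) →L[ℝ] ℝ) x :=
      (EuclideanSpace.proj (𝕜 := ℝ) j).hasFDerivAt
    rw [(((hproj.sub_const (c j)).const_mul (-2 * α * a)).fun_mul
      (hasFDerivAt_gaussian α c x)).fderiv]
    simp [EuclideanSpace.inner_single_right]
    ring
  rw [Finset.sum_congr rfl fun j _ => hterm j, ← Finset.sum_mul, ← Finset.mul_sum,
    EuclideanSpace.norm_sq_eq]
  congr 2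
  simp [Finset.sum_sub_distrib, Finset.mul_sum, mul_comm]

theorem contDiff_gaussian (a α b : ℝ) (c : EuclideanSpace ℝ (Fin N)) :
    ContDiff ℝ 2 (fun y : EuclideanSpace ℝ (Fin N) => a * Real.exp (-α * ‖y - c‖ ^ 2) + b) := by
  have hsq : ContDiff ℝ 2 (fun y : EuclideanSpace ℝ (Fin N) => ‖y - c‖ ^ 2) :=
    (contDiff_norm_sq ℝ).comp (contDiff_id.sub contDiff_const)
  exact (contDiff_const.mul (Real.contDiff_exp.comp (contDiff_const.mul hsq))).add contDiff_const

theorem lapl_gaussian_pos {a α b r : ℝ} (ha : 0 < a) (hα : 0 < α) (hr : 0 ≤ r)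
    (hαr : N ≤ 2 * α * r ^ 2) {c y : EuclideanSpace ℝ (Fin N)} (hy : r < ‖y - c‖) :
    0 < lapl (fun y => a * Real.exp (-α * ‖y - c‖ ^ 2) + b) y := by
  rw [lapl_gaussian]
  have : α * r ^ 2 < α * ‖y - c‖ ^ 2 := by gcongr
  have : 0 < 4 * α ^ 2 * ‖y - c‖ ^ 2 - 2 * α * N := by nlinarith
  positivity

end Laplacian

section MaximumPrinciple

variable {N : ℕ}

def IsHarmonicOn (w : EuclideanSpace ℝ (Fin N) → ℝ) (s : Set (EuclideanSpace ℝ (Fin N))) :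
    Prop :=
  ∀ x ∈ s, ContDiffAt ℝ 2 w x ∧ lapl w x = 0

theorem IsHarmonicOn.mono {w : EuclideanSpace ℝ (Fin N) → ℝ}
    {s t : Set (EuclideanSpace ℝ (Fin N))} (hw : IsHarmonicOn w s) (hts : t ⊆ s) :
    IsHarmonicOn w t :=
  fun x hx => hw x (hts hx)

theorem IsHarmonicOn.continuousOn {w : EuclideanSpace ℝ (Fin N) → ℝ}
    {s : Set (EuclideanSpace ℝ (Fin N))} (hw : IsHarmonicOn w s) : ContinuousOn w s :=
  fun x hx => (hw x hx).1.continuousAt.continuousWithinAt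

theorem nonpos_on_closure_of_lapl_pos {U : Set (EuclideanSpace ℝ (Fin N))} (hU : IsOpen U)
    (hUb : Bornology.IsBounded U) {h : EuclideanSpace ℝ (Fin N) → ℝ}
    (hcont : ContinuousOn h (closure U)) (hh : ∀ x ∈ U, ContDiffAt ℝ 2 h x)
    (hlapl : ∀ x ∈ U, 0 < lapl h x) (hfr : ∀ x ∈ frontier U, h x ≤ 0) :
    ∀ x ∈ closure U, h x ≤ 0 := by
  intro x hx
  obtain ⟨x₀, hx₀, hmax⟩ := hUb.isCompact_closure.exists_isMaxOn ⟨x, hx⟩ hcont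
  refine (hmax hx).trans ?_
  by_cases hx₀U : x₀ ∈ U
  · have hloc : IsLocalMax h x₀ :=
      hmax.isLocalMax (Filter.mem_of_superset (hU.mem_nhds hx₀U) subset_closure)
    exact absurd (lapl_nonpos_of_isLocalMax (hh x₀ hx₀U) hloc) (hlapl x₀ hx₀U).not_ge
  · exact hfr x₀ (hU.frontier_eq ▸ ⟨hx₀, hx₀U⟩)

theorem closure_annulus_subset (c : EuclideanSpace ℝ (Fin N)) (r s : ℝ) :
    closure (ball c s \ closedBall c r) ⊆ closedBall c s \ ball c r :=
  closure_minimal (sdiff_subset_sdiff ball_subset_closedBall ball_subset_closedBall)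
    (isClosed_closedBall.sdiff isOpen_ball)

theorem frontier_annulus_subset (c : EuclideanSpace ℝ (Fin N)) (r s : ℝ) :
    frontier (ball c s \ closedBall c r) ⊆ sphere c s ∪ sphere c r := by
  rw [(isOpen_ball.sdiff isClosed_closedBall).frontier_eq]
  rintro y ⟨hy, hyU⟩
  have hy' := closure_annulus_subset c r s hy
  simp only [Set.mem_sdiff, mem_ball, mem_closedBall, not_lt, not_le] at hy' hyU
  simp only [mem_union, mem_sphere]
  by_contra! hne
  exact hyU ⟨lt_of_le_of_ne hy'.1 hne.1, lt_of_le_of_ne hy'.2 (Ne.symm hne.2)⟩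

theorem exists_hopf_lower_bound {r s : ℝ} (hr : 0 < r) (hrs : r < s) :
    ∃ κ > 0, ∀ (c : EuclideanSpace ℝ (Fin N)) (m : ℝ) (w : EuclideanSpace ℝ (Fin N) → ℝ),
      0 < m → ContinuousOn w (closedBall c s \ ball c r) →
      IsHarmonicOn w (ball c s \ closedBall c r) →
      (∀ x ∈ sphere c s, 0 ≤ w x) → (∀ x ∈ sphere c r, m ≤ w x) →
      ∀ x ∈ ball c s \ closedBall c r, κ * m * (s - dist x c) ≤ w x := by
  set α : ℝ := (N + 1) / r ^ 2
  have hα : 0 < α := by positivity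
  have hαr : α * r ^ 2 = N + 1 := div_mul_cancel₀ _ (by positivity)
  set d : ℝ := Real.exp (-α * r ^ 2) - Real.exp (-α * s ^ 2)
  have hd : 0 < d := by
    have : α * r ^ 2 < α * s ^ 2 := by gcongr
    exact sub_pos.mpr (Real.exp_lt_exp.mpr (by linarith))
  refine ⟨α * s * Real.exp (-α * s ^ 2) / d,
    div_pos (mul_pos (mul_pos hα (hr.trans hrs)) (Real.exp_pos _)) hd, ?_⟩
  intro c m w hm hcont hharm hout hin x hx
  -- the barrier equals `m` on the inner sphere and `0` on the outer one
  set v : EuclideanSpace ℝ (Fin N) → ℝ :=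
    fun y => m / d * Real.exp (-α * ‖y - c‖ ^ 2) + -(m / d * Real.exp (-α * s ^ 2))
  have hvw : ∀ y ∈ closure (ball c s \ closedBall c r), v y - w y ≤ 0 := by
    refine nonpos_on_closure_of_lapl_pos (isOpen_ball.sdiff isClosed_closedBall)
      (isBounded_ball.subset sdiff_subset)
      ((contDiff_gaussian _ _ _ c).continuous.continuousOn.sub
        (hcont.mono (closure_annulus_subset c r s)))
      (fun y hy => (contDiff_gaussian _ _ _ c).contDiffAt.sub (hharm y hy).1) (fun y hy => ?_)
      (fun y hy => ?_)
    · rw [lapl_sub (contDiff_gaussian _ _ _ c).contDiffAt (hharm y hy).1, (hharm y hy).2,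
        sub_zero]
      exact lapl_gaussian_pos (div_pos hm hd) hα hr.le (by linarith)
        (by simpa [dist_eq_norm] using hy.2)
    · rcases frontier_annulus_subset c r s hy with hys | hyr
      · have : ‖y - c‖ = s := by simpa [dist_eq_norm] using hys
        simp only [v, this]
        linarith [hout y hys]
      · have : ‖y - c‖ = r := by simpa [dist_eq_norm] using hyr
        have hvm : m / d * Real.exp (-α * r ^ 2) + -(m / d * Real.exp (-α * s ^ 2)) = m := by
          rw [← mul_neg, ← mul_add]; exact div_mul_cancel₀ m hd.ne'
        simp only [v, this, hvm]
        linarith [hin y hyr]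
  have hxv := hvw x (subset_closure hx)
  simp only [v, ← dist_eq_norm] at hxv
  calc α * s * Real.exp (-α * s ^ 2) / d * m * (s - dist x c)
      = m / d * (α * s * Real.exp (-α * s ^ 2) * (s - dist x c)) := by ring
    _ ≤ m / d * (Real.exp (-α * dist x c ^ 2) - Real.exp (-α * s ^ 2)) := by
      gcongr; exact mul_sub_le_exp_sub_exp hα.le dist_nonneg (mem_ball.mp hx.1).le
    _ ≤ w x := by linarith

theorem pos_on_ball_of_pos_center {w : EuclideanSpace ℝ (Fin N) → ℝ}
    {y : EuclideanSpace ℝ (Fin N)} {s : ℝ} (hw : IsHarmonicOn w (closedBall y s))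
    (hnn : ∀ x ∈ closedBall y s, 0 ≤ w x) (hy : 0 < w y) : ∀ x ∈ ball y s, 0 < w x := by
  intro x hx
  have hs : 0 < s := dist_nonneg.trans_lt hx
  obtain ⟨δ, hδ, hδw⟩ := Metric.eventually_nhds_iff.mp
    ((hw y (mem_closedBall_self hs.le)).1.continuousAt.eventually
      (lt_mem_nhds (half_lt_self hy)))
  set ε := min (δ / 2) (s / 2)
  have hε : 0 < ε := by positivity
  have hεδ : ε < δ := (min_le_left _ _).trans_lt (half_lt_self hδ)
  have hεs : ε < s := (min_le_right _ _).trans_lt (half_lt_self hs)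
  by_cases hxε : dist x y ≤ ε
  · exact (half_pos hy).trans (hδw (hxε.trans_lt hεδ))
  obtain ⟨κ, hκ, hbound⟩ := exists_hopf_lower_bound (N := N) hε hεs
  have := hbound y (w y / 2) w (half_pos hy) (hw.continuousOn.mono sdiff_subset)
    (hw.mono (sdiff_subset.trans ball_subset_closedBall))
    (fun z hz => hnn z (sphere_subset_closedBall hz))
    (fun z hz => (hδw ((mem_sphere.mp hz).trans_lt hεδ)).le) x ⟨hx, by simpa using hxε⟩
  have : 0 < s - dist x y := sub_pos.mpr (mem_ball.mp hx)
  have := half_pos hy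
  nlinarith [mul_pos (mul_pos hκ this) ‹0 < s - dist x y›]

theorem eqOn_zero_of_isHarmonicOn_of_nonneg {w : EuclideanSpace ℝ (Fin N) → ℝ}
    {Ω : Set (EuclideanSpace ℝ (Fin N))} (hΩ : IsOpen Ω) (hΩc : IsPreconnected Ω)
    (hw : IsHarmonicOn w Ω) (hnn : ∀ x ∈ Ω, 0 ≤ w x) {p : EuclideanSpace ℝ (Fin N)}
    (hp : p ∈ Ω) (hp0 : w p = 0) : ∀ x ∈ Ω, w x = 0 := by
  set Z := {x ∈ Ω | w x = 0}
  have hZ : IsOpen Z := by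
    refine Metric.isOpen_iff.mpr fun q ⟨hqΩ, hq0⟩ => ?_
    obtain ⟨r, hr, hrΩ⟩ := Metric.isOpen_iff.mp hΩ q hqΩ
    refine ⟨r / 2, half_pos hr, fun y hy => ?_⟩
    have hyr : closedBall y (r / 2) ⊆ Ω := fun z hz => hrΩ <| by
      have := mem_ball.mp hy; have := mem_closedBall.mp hz
      exact mem_ball.mpr ((dist_triangle z y q).trans_lt (by linarith))
    refine ⟨hyr (mem_closedBall_self (half_pos hr).le), ?_⟩
    by_contra hy0
    have hpos := pos_on_ball_of_pos_center (hw.mono hyr) (fun z hz => hnn z (hyr hz))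
      ((hnn y (hyr (mem_closedBall_self (half_pos hr).le))).lt_of_ne' hy0) q
      (by rw [mem_ball, dist_comm]; exact hy)
    exact hpos.ne' hq0
  have hP : IsOpen (Ω ∩ w ⁻¹' Ioi 0) := hw.continuousOn.isOpen_inter_preimage hΩ isOpen_Ioi
  have hcover : Ω ⊆ Z ∪ (Ω ∩ w ⁻¹' Ioi 0) := fun x hx =>
    (hnn x hx).eq_or_lt.imp (fun h => ⟨hx, h.symm⟩) fun h => ⟨hx, h⟩
  have hdisj : Disjoint Z (Ω ∩ w ⁻¹' Ioi 0) :=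
    Set.disjoint_left.mpr fun x hxZ hxP => (hxP.2 : 0 < w x).ne' hxZ.2
  exact fun x hx => (hΩc.subset_left_of_subset_union hZ hP hdisj hcover ⟨p, hp, hp, hp0⟩ hx).2

end MaximumPrinciple

section HalfSpace

variable {N : ℕ} {i : Fin N}

theorem isOpen_plusPart {D : Set (EuclideanSpace ℝ (Fin N))} (hD : IsOpen D) :
    IsOpen (plusPart i D) :=
  hD.inter (isOpen_lt continuous_const (PiLp.continuous_apply _ _ i))

theorem nonneg_of_mem_closure_plusPart {D : Set (EuclideanSpace ℝ (Fin N))}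
    {x : EuclideanSpace ℝ (Fin N)} (hx : x ∈ closure (plusPart i D)) : 0 ≤ x i :=
  closure_minimal (fun _ hy => hy.2.le) (isClosed_le continuous_const
    (PiLp.continuous_apply _ _ i)) hx

theorem mem_frontier_plusPart {D : Set (EuclideanSpace ℝ (Fin N))} (hD : IsOpen D)
    {x : EuclideanSpace ℝ (Fin N)} (hx : x ∈ D) (hx0 : x i = 0) :
    x ∈ frontier (plusPart i D) := by
  have hlim : Tendsto (fun t : ℝ => x + t • EuclideanSpace.single i 1) (𝓝[>] 0) (𝓝 x) := by
    simpa using ((hasDerivAt_add_smul x (EuclideanSpace.single i 1) 0).continuousAt.tendsto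
      |>.mono_left nhdsWithin_le_nhds)
  refine ⟨mem_closure_of_tendsto hlim ?_, fun hint => ?_⟩
  · filter_upwards [hlim.eventually (hD.mem_nhds hx), self_mem_nhdsWithin] with t ht ht0
    exact ⟨ht, by simpa [hx0] using ht0⟩
  · exact (interior_subset hint : x ∈ plusPart i D).2.ne' hx0

theorem mem_connectedComponentIn_plusPart {D₁ D₂ : Set (EuclideanSpace ℝ (Fin N))} {R : ℝ}
    (hball : ∀ x ∈ closure D₁, ball x R ⊆ D₂) (hplus : IsPreconnected (plusPart i D₁))
    {p z y : EuclideanSpace ℝ (Fin N)} (hp : p ∈ plusPart i D₁)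
    (hz : z ∈ closure (plusPart i D₁)) (hy : y ∈ ball z R) (hyi : 0 < y i) :
    y ∈ connectedComponentIn (plusPart i D₂) p := by
  obtain ⟨z', hz', hzz'⟩ := Metric.mem_closure_iff.mp hz R (dist_nonneg.trans_lt hy)
  set C := ball z R ∩ {x | 0 < x i}
  have hC : IsPreconnected C := ((convex_ball z R).inter
    (convex_halfSpace_gt (EuclideanSpace.proj (𝕜 := ℝ) i).toLinearMap.isLinear 0)).isPreconnected
  have hCD₂ : C ⊆ plusPart i D₂ := fun x hx =>
    ⟨hball z (closure_mono (sep_subset _ _) hz) hx.1, hx.2⟩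
  have hz'C : z' ∈ C := ⟨by rwa [mem_ball, dist_comm], hz'.2⟩
  have hD₁D₂ : plusPart i D₁ ⊆ plusPart i D₂ := fun x hx =>
    ⟨hball x (subset_closure hx.1) (mem_ball_self (dist_nonneg.trans_lt hy)), hx.2⟩
  rw [connectedComponentIn_eq (hplus.subset_connectedComponentIn hp hD₁D₂ hz')]
  exact hC.subset_connectedComponentIn hz'C hCD₂ ⟨hy, hyi⟩

theorem dist_add_smul_single_add_smul_single (z : EuclideanSpace ℝ (Fin N)) (a b : ℝ) :
    dist (z + a • EuclideanSpace.single i 1) (z + b • EuclideanSpace.single i 1) = |a - b| := by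
  rw [dist_add_left, dist_eq_norm, ← sub_smul, norm_smul]
  simp

theorem sub_dist_le_apply (x c : EuclideanSpace ℝ (Fin N)) : c i - dist x c ≤ x i := by
  have := PiLp.dist_apply_le x c i
  rw [Real.dist_eq] at this
  linarith [neg_abs_le (x i - c i)]

theorem exists_linear_lower_bound_near_hyperplane {D K : Set (EuclideanSpace ℝ (Fin N))}
    {w : EuclideanSpace ℝ (Fin N) → ℝ} {ρ m : ℝ} (hρ : 0 < ρ) (hm : 0 < m)
    (hK0 : ∀ z ∈ K, 0 ≤ z i) (hKball : ∀ z ∈ K, closedBall z (2 * ρ) ⊆ D)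
    (hw0 : ContinuousOn w D) (hharm : IsHarmonicOn w (plusPart i D))
    (hnn : ∀ x ∈ D, 0 ≤ x i → 0 ≤ w x)
    (hmin : ∀ z ∈ K, ∀ y ∈ closedBall z (3 * ρ / 2), ρ / 2 ≤ y i → m ≤ w y) :
    ∃ κ > 0, ∀ z ∈ K, ∀ t : ℝ, 0 ≤ t → 0 < z i + t → z i + t < ρ / 2 →
      κ * m * (z i + t) ≤ w (z + t • EuclideanSpace.single i 1) := by
  obtain ⟨κ, hκ, hbound⟩ := exists_hopf_lower_bound (N := N) (half_pos hρ) (half_lt_self hρ)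
  refine ⟨κ, hκ, fun z hz t ht hzt hztρ => ?_⟩
  have hzi := hK0 z hz
  -- the outer sphere touches the hyperplane right below `z`
  set c := z + (ρ - z i) • EuclideanSpace.single i (1 : ℝ)
  have hci : c i = ρ := by simp [c]
  have hcz : dist c z = ρ - z i := by
    have := dist_add_smul_single_add_smul_single (i := i) z (ρ - z i) 0
    rwa [zero_smul, add_zero, sub_zero, abs_of_pos (by linarith)] at this
  have hD : ∀ y ∈ closedBall c ρ, y ∈ D := fun y hy => hKball z hz <| mem_closedBall.mpr <|
    (dist_triangle y c z).trans (by linarith [mem_closedBall.mp hy])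
  have hyi : ∀ y, ρ - dist y c ≤ y i := fun y => hci ▸ sub_dist_le_apply y c
  have hx : dist (z + t • EuclideanSpace.single i 1) c = ρ - (z i + t) := by
    rw [dist_add_smul_single_add_smul_single, abs_of_neg (by linarith)]
    ring
  have := hbound c m w hm (hw0.mono fun y hy => hD y hy.1)
    (hharm.mono fun y hy => ⟨hD y (ball_subset_closedBall hy.1), by
      linarith [hyi y, mem_ball.mp hy.1]⟩)
    (fun y hy => hnn y (hD y (sphere_subset_closedBall hy)) (by
      linarith [hyi y, mem_sphere.mp hy]))
    (fun y hy => hmin z hz y (mem_closedBall.mpr <| (dist_triangle y c z).trans (by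
      linarith [mem_sphere.mp hy])) (by linarith [hyi y, mem_sphere.mp hy]))
    (z + t • EuclideanSpace.single i 1)
    ⟨mem_ball.mpr (by rw [hx]; linarith), by rw [mem_closedBall, hx]; linarith⟩
  rwa [hx, sub_sub_cancel] at this

theorem exists_linear_lower_bound {D K : Set (EuclideanSpace ℝ (Fin N))}
    {w : EuclideanSpace ℝ (Fin N) → ℝ} {R : ℝ} (hR : 0 < R) (hK : IsCompact K)
    (hK0 : ∀ z ∈ K, 0 ≤ z i) (hKball : ∀ z ∈ K, ball z R ⊆ D) (hw0 : ContinuousOn w D)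
    (hharm : IsHarmonicOn w (plusPart i D)) (hnn : ∀ x ∈ D, 0 ≤ x i → 0 ≤ w x)
    (hpos : ∀ z ∈ K, ∀ y ∈ ball z R, 0 < y i → 0 < w y) :
    ∃ L > 0, ∃ ε > 0, ∀ z ∈ K, (0 < z i → L * z i ≤ w z) ∧
      (z i = 0 → ∀ t ∈ Ioo 0 ε, L * t ≤ w (z + t • EuclideanSpace.single i 1)) := by
  set ρ := R / 3
  have hρ : 0 < ρ := by positivity
  have hρR : 3 * ρ = R := mul_div_cancel₀ R three_ne_zero
  set T := cthickening (3 * ρ / 2) K ∩ {y | ρ / 2 ≤ y i}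
  have hT : IsCompact T :=
    hK.cthickening.inter_right (isClosed_le continuous_const (PiLp.continuous_apply _ _ i))
  have hTK : ∀ y ∈ T, ∃ z ∈ K, y ∈ ball z R := by
    rintro y ⟨hy, -⟩
    rw [hK.cthickening_eq_biUnion_closedBall (by positivity), mem_iUnion₂] at hy
    obtain ⟨z, hz, hyz⟩ := hy
    exact ⟨z, hz, mem_ball.mpr ((mem_closedBall.mp hyz).trans_lt (by linarith))⟩
  obtain ⟨m, hm, hmT⟩ := hT.exists_forall_le' (a := 0)
    (hw0.mono fun y hy => by obtain ⟨z, hz, hyz⟩ := hTK y hy; exact hKball z hz hyz)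
    fun y hy => by
      obtain ⟨z, hz, hyz⟩ := hTK y hy
      exact hpos z hz y hyz ((half_pos hρ).trans_le hy.2)
  have hmin : ∀ z ∈ K, ∀ y ∈ closedBall z (3 * ρ / 2), ρ / 2 ≤ y i → m ≤ w y :=
    fun z hz y hy hyi => hmT y ⟨mem_cthickening_of_dist_le y z _ K hz hy, hyi⟩
  obtain ⟨κ, hκ, hnear⟩ := exists_linear_lower_bound_near_hyperplane hρ hm hK0
    (fun z hz => (closedBall_subset_ball (by linarith)).trans (hKball z hz)) hw0 hharm hnn hmin
  obtain ⟨B, hB, hKB⟩ := hK.isBounded.exists_pos_norm_le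
  refine ⟨min (κ * m) (m / B), by positivity, ρ / 2, half_pos hρ, fun z hz => ⟨fun hzi => ?_,
    fun hzi t ht => ?_⟩⟩
  · rcases lt_or_ge (z i) (ρ / 2) with hzρ | hzρ
    · have := hnear z hz 0 le_rfl (by simpa using hzi) (by simpa using hzρ)
      simp only [add_zero, zero_smul] at this
      exact (mul_le_mul_of_nonneg_right (min_le_left _ _) hzi.le).trans this
    · have hziB : z i ≤ B := (le_abs_self _).trans ((PiLp.norm_apply_le z i).trans (hKB z hz))
      calc min (κ * m) (m / B) * z i ≤ m / B * B := by gcongr; exact min_le_right _ _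
        _ = m := div_mul_cancel₀ m hB.ne'
        _ ≤ w z := hmin z hz z (mem_closedBall_self (by positivity)) hzρ
  · have := hnear z hz t ht.1.le (by linarith [ht.1]) (by linarith [ht.2])
    rw [hzi, zero_add] at this
    exact (mul_le_mul_of_nonneg_right (min_le_left _ _) ht.1.le).trans this

theorem eq_zero_or_exists_linear_lower_bound {D₁ D₂ : Set (EuclideanSpace ℝ (Fin N))}
    {w : EuclideanSpace ℝ (Fin N) → ℝ} {R : ℝ} (hR : 0 < R) (hD₁bd : Bornology.IsBounded D₁)
    (hD₂open : IsOpen D₂) (hball : ∀ x ∈ closure D₁, ball x R ⊆ D₂)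
    (hplus : IsConnected (plusPart i D₁)) (hw0 : ContinuousOn w D₂)
    (hharm : IsHarmonicOn w (plusPart i D₂)) (hnn : ∀ x ∈ D₂, 0 ≤ x i → 0 ≤ w x) :
    (∀ x ∈ closure (plusPart i D₁), 0 < x i → w x = 0) ∨
      ∃ L > 0, ∃ ε > 0, ∀ z ∈ closure (plusPart i D₁), (0 < z i → L * z i ≤ w z) ∧
        (z i = 0 → ∀ t ∈ Ioo 0 ε, L * t ≤ w (z + t • EuclideanSpace.single i 1)) := by
  obtain ⟨p, hp⟩ := hplus.nonempty
  set Ω := connectedComponentIn (plusPart i D₂) p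
  have hΩU : Ω ⊆ plusPart i D₂ := connectedComponentIn_subset _ _
  have hΩnn : ∀ x ∈ Ω, 0 ≤ w x := fun x hx => hnn x (hΩU hx).1 (hΩU hx).2.le
  have hKΩ : ∀ z ∈ closure (plusPart i D₁), ∀ y ∈ ball z R, 0 < y i → y ∈ Ω :=
    fun _ hz _ hy hyi => mem_connectedComponentIn_plusPart hball hplus.isPreconnected hp hz hy hyi
  by_cases hvan : ∃ q ∈ Ω, w q = 0
  · obtain ⟨q, hq, hq0⟩ := hvan
    have hΩ0 := eqOn_zero_of_isHarmonicOn_of_nonneg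
      (isOpen_plusPart hD₂open).connectedComponentIn isPreconnected_connectedComponentIn
      (hharm.mono hΩU) hΩnn hq hq0
    exact Or.inl fun x hx hxi => hΩ0 x (hKΩ x hx x (mem_ball_self hR) hxi)
  · push Not at hvan
    exact Or.inr <| exists_linear_lower_bound hR (hD₁bd.subset (sep_subset _ _)).isCompact_closure
      (fun _ => nonneg_of_mem_closure_plusPart)
      (fun z hz => hball z (closure_mono (sep_subset _ _) hz)) hw0 hharm hnn
      fun z hz y hy hyi => (hΩnn y (hKΩ z hz y hy hyi)).lt_of_ne' (hvan y (hKΩ z hz y hy hyi))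

theorem harnack_of_linear_lower_bound {K : Set (EuclideanSpace ℝ (Fin N))}
    {w : EuclideanSpace ℝ (Fin N) → ℝ} {L C ε : ℝ} (hC : 0 ≤ C) (hε : 0 < ε)
    (hwK : ∀ x ∈ K, x i ≠ 0 → w x ≤ C * L) (hzero : ∀ z ∈ K, z i = 0 → w z = 0)
    (hlow : ∀ z ∈ K, (0 < z i → L * z i ≤ w z) ∧
      (z i = 0 → ∀ t ∈ Ioo 0 ε, L * t ≤ w (z + t • EuclideanSpace.single i 1))) :
    ∀ z ∈ K, ∀ x ∈ K, x i ≠ 0 →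
      (0 < z i → w x ≤ C * w z / z i) ∧
      (z i = 0 → ∀ d : ℝ,
        HasDerivWithinAt (fun t : ℝ => w (z + t • EuclideanSpace.single i 1)) d (Ici 0) 0 →
        w x ≤ C * d) := by
  refine fun z hz x hx hxi => ⟨fun hzi => ?_, fun hzi d hd => ?_⟩
  · calc w x ≤ C * L := hwK x hx hxi
      _ ≤ C * (w z / z i) := by gcongr; exact (le_div_iff₀ hzi).mpr ((hlow z hz).1 hzi)
      _ = C * w z / z i := (mul_div_assoc _ _ _).symm
  · refine (hwK x hx hxi).trans (mul_le_mul_of_nonneg_left ?_ hC)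
    exact le_of_hasDerivWithinAt_Ici_of_mul_le hd hε (by simpa using hzero z hz hzi)
      ((hlow z hz).2 hzi)

theorem exists_harnack_constant {D₁ D₂ : Set (EuclideanSpace ℝ (Fin N))}
    {w : EuclideanSpace ℝ (Fin N) → ℝ} {R : ℝ} (hR : 0 < R) (hD₁bd : Bornology.IsBounded D₁)
    (hD₂open : IsOpen D₂) (hball : ∀ x ∈ closure D₁, ball x R ⊆ D₂)
    (hplus : IsConnected (plusPart i D₁)) (hw0 : ContinuousOn w D₂)
    (hharm : IsHarmonicOn w (plusPart i D₂)) (hzero : ∀ x ∈ D₂, x i = 0 → w x = 0)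
    (hnn : ∀ x ∈ D₂, 0 ≤ x i → 0 ≤ w x) :
    ∃ C > 0, ∀ z ∈ closure (plusPart i D₁), ∀ x ∈ closure (plusPart i D₁), x i ≠ 0 →
      (0 < z i → w x ≤ C * w z / z i) ∧
      (z i = 0 → ∀ d : ℝ,
        HasDerivWithinAt (fun t : ℝ => w (z + t • EuclideanSpace.single i 1)) d (Ici 0) 0 →
        w x ≤ C * d) := by
  have hKball : ∀ z ∈ closure (plusPart i D₁), ball z R ⊆ D₂ :=
    fun z hz => hball z (closure_mono (sep_subset _ _) hz)
  have hKD₂ : ∀ z ∈ closure (plusPart i D₁), z ∈ D₂ := fun z hz => hKball z hz (mem_ball_self hR)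
  obtain ⟨S, hS, hwS⟩ := ((hD₁bd.subset (sep_subset _ _)).isCompact_closure.image_of_continuousOn
    (hw0.mono hKD₂)).isBounded.exists_pos_norm_le
  rcases eq_zero_or_exists_linear_lower_bound hR hD₁bd hD₂open hball hplus hw0 hharm hnn with
    hvan | ⟨L, hL, ε, hε, hlow⟩
  · refine ⟨1, one_pos, harnack_of_linear_lower_bound (L := 0) zero_le_one hR
      (fun x hx hxi => (hvan x hx ((nonneg_of_mem_closure_plusPart hx).lt_of_ne' hxi)).trans_le
        (by simp))
      (fun z hz => hzero z (hKD₂ z hz)) fun z hz => ⟨fun hzi => ?_, fun hzi t ht => ?_⟩⟩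
    · simpa using hnn z (hKD₂ z hz) hzi.le
    · simpa using hnn _ (hKball z hz (by simp [dist_eq_norm, norm_smul, abs_of_pos ht.1, ht.2]))
        (by simp [hzi, ht.1.le])
  · refine ⟨S / L, div_pos hS hL, harnack_of_linear_lower_bound (div_pos hS hL).le hε
      (fun x hx _ => ?_) (fun z hz => hzero z (hKD₂ z hz)) hlow⟩
    rw [div_mul_cancel₀ S hL.ne']
    exact (le_abs_self _).trans (hwS _ ⟨x, hx, rfl⟩)

end HalfSpace

/-- Lemma 3.2: Harnack-type estimate on all of `D₁⁺ \ {x₁ = 0}` for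
nonnegative harmonic functions vanishing on `{x₁ = 0}`. -/
theorem harnack_estimate_full (N : ℕ) (hN : 2 ≤ N)
    (D₁ D₂ : Set (EuclideanSpace ℝ (Fin N)))
    (hD₁bd : Bornology.IsBounded D₁)
    (hD₂open : IsOpen D₂)
    (R : ℝ) (hR : 0 < R) (hball : ∀ x ∈ closure D₁, ball x R ⊆ D₂)
    (hplus : IsConnected (plusPart ⟨0, by omega⟩ D₁))
    (w : EuclideanSpace ℝ (Fin N) → ℝ)
    (hw0 : ContinuousOn w D₂) (hw2 : ContDiffOn ℝ 2 w (plusPart ⟨0, by omega⟩ D₂))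
    (hharm : ∀ x ∈ plusPart ⟨0, by omega⟩ D₂, lapl w x = 0)
    (hnn : ∀ x ∈ plusPart ⟨0, by omega⟩ D₂, 0 ≤ w x)
    (hzero : ∀ x ∈ frontier (plusPart ⟨0, by omega⟩ D₂), x ⟨0, by omega⟩ = 0 → w x = 0) :
    ∃ C > 0, ∃ M : ℝ, 1 ≤ M ∧ ∀ z ∈ closure (plusPart ⟨0, by omega⟩ D₁),
      ∀ x ∈ closure (plusPart ⟨0, by omega⟩ D₁), x ⟨0, by omega⟩ ≠ 0 →
        (0 < z ⟨0, by omega⟩ → w x ≤ M * C * w z / z ⟨0, by omega⟩) ∧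
        (z ⟨0, by omega⟩ = 0 → ∀ d : ℝ,
          HasDerivWithinAt
            (fun t : ℝ => w (z + t • EuclideanSpace.single ⟨0, by omega⟩ (1 : ℝ)))
            d (Ici (0 : ℝ)) 0 →
          w x ≤ M * C * d) := by
  generalize (⟨0, by omega⟩ : Fin N) = i at *
  have hw00 : ∀ x ∈ D₂, x i = 0 → w x = 0 := fun x hx hxi =>
    hzero x (mem_frontier_plusPart hD₂open hx hxi) hxi
  obtain ⟨C, hC, hharnack⟩ := exists_harnack_constant hR hD₁bd hD₂open hball hplus hw0
    (fun x hx => ⟨hw2.contDiffAt ((isOpen_plusPart hD₂open).mem_nhds hx), hharm x hx⟩) hw00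
    fun x hx hxi => hxi.eq_or_lt.elim (fun h => (hw00 x hx h.symm).ge) fun h => hnn x ⟨hx, h⟩
  exact ⟨C, hC, 1, le_rfl, by simpa using hharnack⟩
end

section
/- Let N ≥ 2, let G be a bounded domain in ℝ^N with boundary ∂G of class C^{2,α} (0 < α ≤ 1), let R > 0, set Ω = G + B_R, and let u ∈ C²(Ω) ∩ C⁰(cl Ω) solve −Δu = 1 in Ω with u = 0 on ∂Ω. Then there exists a positive constant K, depending only on the diameter of G and the C^{2,α}-regularity of ∂G, such that K·dist(x, ∂G) + min_{∂G} u ≤ u(x) for every x in the closure of G. -/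
/-!
Let `f` be the defining function of `∂G`, so `G = {f < 0}` and `∇f ≠ 0` on `∂G`. For small
`a > 0` the function `u + a f` has negative Laplacian on `G`, so by the weak minimum principle
it is bounded below by its minimum on `∂G`, where it coincides with `u`; hence
`a (-f) + min_{∂G} u ≤ u` on `cl G`. Near a boundary point `f` increases at a uniform rate in a
fixed direction, so walking in that direction from `x` reaches `{f = 0} = ∂G` within distance
`O(-f x)`; by compactness of `cl G` this gives `dist(x, ∂G) ≤ C (-f x)`, and `K = a / C` works.
-/

open Metric Set
open scoped Pointwise NNReal

open Filter Topology InnerProductSpace Laplacian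

theorem IsLocalMin.deriv_deriv_nonneg {g : ℝ → ℝ} {t : ℝ} (hmin : IsLocalMin g t)
    (hg : ContinuousAt g t) : 0 ≤ deriv (deriv g) t := by
  by_contra! hneg
  have hmax : IsLocalMax g t := isLocalMax_of_deriv_deriv_neg hneg hmin.deriv_eq_zero hg
  have hconst : g =ᶠ[𝓝 t] fun _ => g t := by
    filter_upwards [hmin, hmax] with s h₁ h₂ using le_antisymm h₂ h₁
  have hderiv : deriv g =ᶠ[𝓝 t] fun _ => 0 := by
    filter_upwards [hconst.deriv] with s hs using by simp [hs]
  simp [hderiv.deriv_eq] at hneg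

section

variable {E : Type*} [NormedAddCommGroup E] [NormedSpace ℝ E]

theorem hasDerivAt_fderiv_apply_add_smul {h : E → ℝ} {z : E} (hh : ContDiffAt ℝ 2 h z)
    (v : E) :
    HasDerivAt (fun t : ℝ => fderiv ℝ h (z + t • v) v) (fderiv ℝ (fderiv ℝ h) z v v) 0 := by
  have hline : HasDerivAt (fun t : ℝ => z + t • v) v 0 := by
    simpa using ((hasDerivAt_id (0 : ℝ)).smul_const v).const_add z
  have hdiff : DifferentiableAt ℝ (fderiv ℝ h) z :=
    (hh.fderiv_right (m := 1) (by norm_num)).differentiableAt one_ne_zero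
  have hcomp := hdiff.hasFDerivAt.comp_hasDerivAt_of_eq 0 hline (by simp)
  exact hcomp.clm_apply (hasDerivAt_const 0 v) |>.congr_deriv (by simp)

theorem IsLocalMin.fderiv_fderiv_apply_self_nonneg {h : E → ℝ} {z : E}
    (hmin : IsLocalMin h z) (hh : ContDiffAt ℝ 2 h z) (v : E) :
    0 ≤ fderiv ℝ (fderiv ℝ h) z v v := by
  set g : ℝ → ℝ := fun t => h (z + t • v)
  have hcont : Continuous fun t : ℝ => z + t • v := by fun_prop
  have hg : IsLocalMin g 0 := by
    have hmin' : IsLocalMin h (z + (0 : ℝ) • v) := by simpa using hmin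
    exact hmin'.comp_continuous (g := fun t : ℝ => z + t • v) (b := 0) hcont.continuousAt
  have hdiff : ∀ᶠ t in 𝓝 (0 : ℝ), DifferentiableAt ℝ h (z + t • v) := by
    have := (hh.eventually (by simp)).mono fun y hy => hy.differentiableAt (by norm_num)
    exact hcont.continuousAt.tendsto.eventually (by simpa using this)
  have hderiv : deriv g =ᶠ[𝓝 0] fun t => fderiv ℝ h (z + t • v) v := by
    filter_upwards [hdiff] with t ht
    have hline : HasDerivAt (fun s : ℝ => z + s • v) v t := by
      simpa using ((hasDerivAt_id t).smul_const v).const_add z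
    exact (ht.hasFDerivAt.comp_hasDerivAt t hline).deriv
  have := hg.deriv_deriv_nonneg (hh.continuousAt.comp_of_eq hcont.continuousAt (by simp))
  rwa [hderiv.deriv_eq, (hasDerivAt_fderiv_apply_add_smul hh v).deriv] at this

theorem exists_mem_Icc_apply_add_smul_eq_zero {f : E → ℝ} (hf : Differentiable ℝ f) {x w : E}
    {c T : ℝ} (hT : 0 ≤ T) (hderiv : ∀ t ∈ Icc 0 T, c ≤ fderiv ℝ f (x + t • w) w)
    (hx : f x ≤ 0) (hcT : -f x ≤ c * T) : ∃ t ∈ Icc 0 T, f (x + t • w) = 0 := by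
  set g : ℝ → ℝ := fun t => f (x + t • w)
  have hg : ∀ t, HasDerivAt g (fderiv ℝ f (x + t • w) w) t := fun t =>
    (hf _).hasFDerivAt.comp_hasDerivAt t (by
      simpa using ((hasDerivAt_id t).smul_const w).const_add x)
  have hgc : Continuous g := continuous_iff_continuousAt.2 fun t => (hg t).continuousAt
  have hgrowth := (convex_Icc 0 T).mul_sub_le_image_sub_of_le_deriv hgc.continuousOn
    (fun t _ => (hg t).differentiableAt.differentiableWithinAt)
    (fun t ht => (hg t).deriv ▸ hderiv t (interior_subset ht))
    0 (left_mem_Icc.2 hT) T (right_mem_Icc.2 hT) hT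
  have hg0 : g 0 = f x := by simp [g]
  exact intermediate_value_Icc hT hgc.continuousOn ⟨by linarith, by linarith⟩

theorem exists_pos_eventually_infDist_le {f : E → ℝ} (hf : ContDiff ℝ 1 f) {p : E}
    (hp : f p = 0) (hfp : fderiv ℝ f p ≠ 0) :
    ∃ C > 0, ∀ᶠ x in 𝓝 p, f x ≤ 0 → infDist x (f ⁻¹' {0}) ≤ C * -f x := by
  obtain ⟨v, hv⟩ : ∃ v, fderiv ℝ f p v ≠ 0 := by
    by_contra! h
    exact hfp (ContinuousLinearMap.ext h)
  set w := (fderiv ℝ f p v)⁻¹ • v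
  have hw : fderiv ℝ f p w = 1 := by simp [w, hv]
  have hw0 : w ≠ 0 := fun h0 => by simp [h0] at hw
  have hcont : Continuous fun y => fderiv ℝ f y w :=
    (continuous_eval_const w).comp (hf.continuous_fderiv one_ne_zero)
  obtain ⟨r, hr, hball⟩ := Metric.eventually_nhds_iff_ball.1
    (continuousAt_const.eventually_lt hcont.continuousAt
      (by norm_num [hw] : (1 : ℝ) / 2 < fderiv ℝ f p w))
  refine ⟨2 * ‖w‖, mul_pos two_pos (norm_pos_iff.2 hw0), ?_⟩
  have hsmall : ∀ᶠ x in 𝓝 p, 2 * ‖w‖ * -f x < r / 2 :=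
    (by fun_prop : Continuous fun x => 2 * ‖w‖ * -f x).continuousAt.eventually_lt
      continuousAt_const (by simpa [hp] using half_pos hr)
  filter_upwards [ball_mem_nhds p (half_pos hr), hsmall] with x hx hxf hfx
  have hderiv : ∀ t ∈ Icc 0 (2 * -f x), 1 / 2 ≤ fderiv ℝ f (x + t • w) w := by
    rintro t ⟨ht0, htT⟩
    refine (hball _ ?_).le
    have : t * ‖w‖ ≤ 2 * ‖w‖ * -f x := by nlinarith [norm_nonneg w]
    rw [mem_ball] at hx ⊢
    calc dist (x + t • w) p ≤ dist (x + t • w) x + dist x p := dist_triangle _ _ _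
      _ = t * ‖w‖ + dist x p := by simp [norm_smul, abs_of_nonneg ht0]
      _ < r := by linarith
  obtain ⟨t, ⟨ht0, htT⟩, hzero⟩ := exists_mem_Icc_apply_add_smul_eq_zero
    (hf.differentiable one_ne_zero) (by linarith) hderiv hfx (by linarith)
  calc infDist x (f ⁻¹' {0}) ≤ dist x (x + t • w) := infDist_le_dist_of_mem hzero
    _ = t * ‖w‖ := by simp [norm_smul, abs_of_nonneg ht0]
    _ ≤ 2 * ‖w‖ * -f x := by nlinarith [norm_nonneg w]

theorem exists_pos_infDist_frontier_le {f : E → ℝ} (hf : ContDiff ℝ 1 f) {G : Set E}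
    (hGc : IsCompact (closure G)) (hGf : G = {x | f x < 0}) (hfront : frontier G = {x | f x = 0})
    (hgrad : ∀ x ∈ frontier G, fderiv ℝ f x ≠ 0) :
    ∃ C > 0, ∀ x ∈ closure G, infDist x (frontier G) ≤ C * -f x := by
  have hnonpos : ∀ x ∈ closure G, f x ≤ 0 := by
    refine fun x hx => closure_minimal ?_ (isClosed_le hf.continuous continuous_const) hx
    rw [hGf]
    exact fun y (hy : f y < 0) => hy.le
  obtain ⟨D, hD1, hD⟩ :=
    (hGc.bddAbove_image (continuous_infDist_pt (frontier G)).continuousOn).exists_ge 1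
  suffices ∃ C > 0, ∀ x ∈ closure G ∩ closure G, infDist x (frontier G) ≤ C * -f x by
    simpa using this
  refine hGc.induction_on (p := fun t => ∃ C > 0, ∀ x ∈ t ∩ closure G,
      infDist x (frontier G) ≤ C * -f x) ⟨1, one_pos, by simp⟩ ?_ ?_ ?_
  · rintro s t hst ⟨C, hC, hbound⟩
    exact ⟨C, hC, fun x hx => hbound x ⟨hst hx.1, hx.2⟩⟩
  · rintro s t ⟨C₁, hC₁, hbound₁⟩ ⟨C₂, hC₂, hbound₂⟩
    refine ⟨max C₁ C₂, lt_max_of_lt_left hC₁, ?_⟩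
    rintro x ⟨hx | hx, hxG⟩
    · exact (hbound₁ x ⟨hx, hxG⟩).trans
        (mul_le_mul_of_nonneg_right (le_max_left _ _) (neg_nonneg.2 (hnonpos x hxG)))
    · exact (hbound₂ x ⟨hx, hxG⟩).trans
        (mul_le_mul_of_nonneg_right (le_max_right _ _) (neg_nonneg.2 (hnonpos x hxG)))
  intro x hx
  rcases (hnonpos x hx).lt_or_eq with hneg | hzero
  · have hnhds : {y | f y < f x / 2} ∈ 𝓝 x :=
      (isOpen_lt hf.continuous continuous_const).mem_nhds (by simp; linarith)
    refine ⟨_, mem_nhdsWithin_of_mem_nhds hnhds, 2 * D / -f x,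
      div_pos (by linarith) (by linarith), ?_⟩
    rintro y ⟨hy, hyG⟩
    calc infDist y (frontier G) ≤ D := hD _ (mem_image_of_mem _ hyG)
      _ ≤ 2 * D / -f x * -f y := by
        rw [div_mul_eq_mul_div, le_div_iff₀ (by linarith)]
        nlinarith [hy.out]
  · have hxfront : x ∈ frontier G := hfront ▸ hzero
    obtain ⟨C, hC, hev⟩ := exists_pos_eventually_infDist_le hf hzero (hgrad x hxfront)
    refine ⟨_, mem_nhdsWithin_of_mem_nhds hev, C, hC, fun y ⟨hy, hyG⟩ => ?_⟩
    rw [hfront]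
    exact hy (hnonpos y hyG)

end

section

variable {E : Type*} [NormedAddCommGroup E] [InnerProductSpace ℝ E] [FiniteDimensional ℝ E]

theorem laplacian_eq_sum_fderiv_fderiv {ι : Type*} [Fintype ι] (b : OrthonormalBasis ι ℝ E)
    (h : E → ℝ) (z : E) : Δ h z = ∑ i, fderiv ℝ (fderiv ℝ h) z (b i) (b i) := by
  simp [laplacian_eq_iteratedFDeriv_orthonormalBasis h b, iteratedFDeriv_two_apply]

theorem IsLocalMin.laplacian_nonneg {h : E → ℝ} {z : E} (hmin : IsLocalMin h z)
    (hh : ContDiffAt ℝ 2 h z) : 0 ≤ Δ h z := by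
  rw [laplacian_eq_sum_fderiv_fderiv (stdOrthonormalBasis ℝ E)]
  exact Finset.sum_nonneg fun i _ => hmin.fderiv_fderiv_apply_self_nonneg hh _

theorem ContDiff.continuous_laplacian {f : E → ℝ} (hf : ContDiff ℝ 2 f) :
    Continuous (Δ f) := by
  rw [laplacian_eq_iteratedFDeriv_stdOrthonormalBasis]
  exact continuous_finsetSum _ fun i _ =>
    (continuous_eval_const _).comp (hf.continuous_iteratedFDeriv le_rfl)

theorem exists_mem_frontier_le_of_laplacian_neg {V : Set E} (hV : IsOpen V)
    (hVc : IsCompact (closure V)) {h : E → ℝ} (hcont : ContinuousOn h (closure V))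
    (hC2 : ∀ x ∈ V, ContDiffAt ℝ 2 h x) (hΔ : ∀ x ∈ V, Δ h x < 0) {x : E}
    (hx : x ∈ closure V) :
    ∃ y ∈ frontier V, h y ≤ h x := by
  obtain ⟨z, hz, hzmin⟩ := hVc.exists_isMinOn ⟨x, hx⟩ hcont
  refine ⟨z, ?_, hzmin hx⟩
  rw [hV.frontier_eq]
  refine ⟨hz, fun hzV => ?_⟩
  have hloc : IsLocalMin h z :=
    hzmin.isLocalMin (mem_of_superset (hV.mem_nhds hzV) subset_closure)
  exact (hΔ z hzV).not_ge (hloc.laplacian_nonneg (hC2 z hzV))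

theorem exists_pos_mul_neg_add_sInf_le {G : Set E} (hG : IsOpen G)
    (hGc : IsCompact (closure G)) {u f : E → ℝ} (hucont : ContinuousOn u (closure G))
    (hu : ∀ x ∈ G, ContDiffAt ℝ 2 u x) (hΔu : ∀ x ∈ G, Δ u x = -1)
    (hf : ContDiff ℝ 2 f) (hf0 : ∀ x ∈ frontier G, f x = 0) :
    ∃ a > 0, ∀ x ∈ closure G, a * -f x + sInf (u '' frontier G) ≤ u x := by
  obtain ⟨C, hC⟩ := hGc.exists_bound_of_continuousOn hf.continuous_laplacian.continuousOn
  have hM : 0 < max C 1 := lt_max_of_lt_right one_pos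
  set a := 1 / (2 * max C 1)
  have ha : 0 < a := by positivity
  have hfa : ContDiff ℝ 2 (a • f) := hf.const_smul a
  have hΔ : ∀ x ∈ G, Δ (u + a • f) x < 0 := fun x hx => by
    have hbound : a * Δ f x ≤ 1 / 2 := by
      have := (le_abs_self _).trans ((hC x (subset_closure hx)).trans (le_max_left C 1))
      calc a * Δ f x ≤ a * max C 1 := by gcongr
        _ = 1 / 2 := by simp only [a]; field_simp
    rw [(hu x hx).laplacian_add hfa.contDiffAt, laplacian_smul a hf.contDiffAt,
      hΔu x hx, smul_eq_mul]
    linarith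
  have hfrontier : IsCompact (frontier G) :=
    hGc.of_isClosed_subset isClosed_frontier frontier_subset_closure
  have hbdd : BddBelow (u '' frontier G) :=
    (hfrontier.image_of_continuousOn (hucont.mono frontier_subset_closure)).bddBelow
  refine ⟨a, ha, fun x hx => ?_⟩
  obtain ⟨y, hy, hyx⟩ := exists_mem_frontier_le_of_laplacian_neg hG hGc
    (hucont.add hfa.continuous.continuousOn) (fun z hz => (hu z hz).add hfa.contDiffAt) hΔ hx
  have := csInf_le hbdd (mem_image_of_mem u hy)
  simp only [Pi.add_apply, Pi.smul_apply, smul_eq_mul, hf0 y hy] at hyx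
  linarith

end

theorem lapl_eq_laplacian {N : ℕ} {u : EuclideanSpace ℝ (Fin N) → ℝ}
    {x : EuclideanSpace ℝ (Fin N)} (hu : ContDiffAt ℝ 2 u x) : lapl u x = Δ u x := by
  rw [lapl, laplacian_eq_sum_fderiv_fderiv (EuclideanSpace.basisFun (Fin N) ℝ)]
  refine Finset.sum_congr rfl fun i _ => ?_
  rw [EuclideanSpace.basisFun_apply, fderiv_clm_apply
    ((hu.fderiv_right (m := 1) (by norm_num)).differentiableAt one_ne_zero)
    (differentiableAt_const _)]
  simp

theorem lower_bound_dist_general (N : ℕ)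
    (G : Set (EuclideanSpace ℝ (Fin N)))
    (hGopen : IsOpen G) (hGbd : Bornology.IsBounded G)
    (α : ℝ) (hGreg : C2AlphaBoundary G α)
    (R : ℝ) (hR : 0 < R)
    (Ω : Set (EuclideanSpace ℝ (Fin N))) (hΩ : Ω = G + ball (0 : EuclideanSpace ℝ (Fin N)) R)
    (u : EuclideanSpace ℝ (Fin N) → ℝ)
    (hu2 : ContDiffOn ℝ 2 u Ω)
    (heq : ∀ x ∈ Ω, lapl u x = -1) :
    ∃ K > 0, ∀ x ∈ closure G,
      K * infDist x (frontier G) + sInf (u '' frontier G) ≤ u x := by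
  obtain ⟨f, -, hf, -, hGf, hfront, hgrad⟩ := hGreg
  have hΩopen : IsOpen Ω := hΩ ▸ isOpen_ball.add_left
  have hGΩ : closure G ⊆ Ω := by
    rw [hΩ, add_ball_zero]
    exact closure_subset_thickening hR G
  have hGc : IsCompact (closure G) := hGbd.isCompact_closure
  have hu : ∀ x ∈ G, ContDiffAt ℝ 2 u x := fun x hx =>
    hu2.contDiffAt (hΩopen.mem_nhds (hGΩ (subset_closure hx)))
  have hΔu : ∀ x ∈ G, Δ u x = -1 := fun x hx =>
    lapl_eq_laplacian (hu x hx) ▸ heq x (hGΩ (subset_closure hx))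
  obtain ⟨a, ha, hbarrier⟩ := exists_pos_mul_neg_add_sInf_le hGopen hGc
    (hu2.continuousOn.mono hGΩ) hu hΔu hf (fun x hx => by rwa [hfront] at hx)
  obtain ⟨C, hC, hdist⟩ :=
    exists_pos_infDist_frontier_le (hf.of_le one_le_two) hGc hGf hfront hgrad
  refine ⟨a / C, div_pos ha hC, fun x hx => ?_⟩
  calc a / C * infDist x (frontier G) + sInf (u '' frontier G)
      ≤ a / C * (C * -f x) + sInf (u '' frontier G) := by gcongr; exact hdist x hx
    _ = a * -f x + sInf (u '' frontier G) := by field_simp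
    _ ≤ u x := hbarrier x hx

/-- Lemma 3.4, first part: lower bound on `u` in terms of the distance
from `∂G`. -/
theorem lower_bound_dist (N : ℕ) (hN : 2 ≤ N)
    (G : Set (EuclideanSpace ℝ (Fin N)))
    (hGopen : IsOpen G) (hGconn : IsConnected G) (hGbd : Bornology.IsBounded G)
    (α : ℝ) (hα0 : 0 < α) (hα1 : α ≤ 1) (hGreg : C2AlphaBoundary G α)
    (R : ℝ) (hR : 0 < R)
    (Ω : Set (EuclideanSpace ℝ (Fin N))) (hΩ : Ω = G + ball (0 : EuclideanSpace ℝ (Fin N)) R)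
    (u : EuclideanSpace ℝ (Fin N) → ℝ)
    (hu2 : ContDiffOn ℝ 2 u Ω) (hu0 : ContinuousOn u (closure Ω))
    (heq : ∀ x ∈ Ω, lapl u x = -1)
    (hbc : ∀ x ∈ frontier Ω, u x = 0) :
    ∃ K > 0, ∀ x ∈ closure G,
      K * infDist x (frontier G) + sInf (u '' frontier G) ≤ u x :=
  lower_bound_dist_general N G hGopen hGbd α hGreg R hR Ω hΩ u hu2 heq
end

section
/- Let G be a bounded domain in ℝ^N, let R > 0 and set Ω = G + B_R. Then for every unit vector ω ∈ ℝ^N and every λ ∈ ℝ: if the reflected cap G^λ is contained in G, then the reflected cap Ω^λ is contained in Ω. -/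
open Metric Set
open scoped Pointwise NNReal

/-! `Ω` is the `R`-thickening of `G`. Reflection in `π_λ` is an isometry and does not increase
the distance from a point on the right of `π_λ` to one on the left. So if `x^λ ∈ Ω_λ` lies within
`R` of `g ∈ G`, then `x` lies within `R` of `g` when `g` is on the left, and of
`g^λ ∈ G^λ ⊆ G` otherwise. -/

open RealInnerProductSpace

section UnitVector

variable {E : Type*} [NormedAddCommGroup E] [InnerProductSpace ℝ E] {ω : E}

theorem norm_sub_smul_sq (hω : ‖ω‖ = 1) (v : E) (s : ℝ) :
    ‖v - s • ω‖ ^ 2 = ‖v‖ ^ 2 + s * (s - 2 * ⟪v, ω⟫) := by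
  rw [norm_sub_sq_real, real_inner_smul_right, norm_smul, hω, mul_one, Real.norm_eq_abs, sq_abs]
  ring

theorem norm_sub_smul_le_of_le_two_inner (hω : ‖ω‖ = 1) {v : E} {s : ℝ} (hs : 0 ≤ s)
    (hsv : s ≤ 2 * ⟪v, ω⟫) : ‖v - s • ω‖ ≤ ‖v‖ := by
  have : s * (s - 2 * ⟪v, ω⟫) ≤ 0 := mul_nonpos_of_nonneg_of_nonpos hs (by linarith)
  rw [← pow_le_pow_iff_left₀ (norm_nonneg _) (norm_nonneg _) two_ne_zero, norm_sub_smul_sq hω]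
  linarith

end UnitVector

section Reflection

variable {N : ℕ} {ω : EuclideanSpace ℝ (Fin N)} {lam : ℝ}

theorem inner_reflPt (hω : ‖ω‖ = 1) (x : EuclideanSpace ℝ (Fin N)) :
    ⟪reflPt ω lam x, ω⟫ = 2 * lam - ⟪x, ω⟫ := by
  rw [reflPt, inner_sub_left, real_inner_smul_left, real_inner_self_eq_norm_sq, hω]
  ring

theorem reflPt_reflPt (hω : ‖ω‖ = 1) (x : EuclideanSpace ℝ (Fin N)) :
    reflPt ω lam (reflPt ω lam x) = x := by
  rw [reflPt, inner_reflPt hω, reflPt]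
  module

theorem reflPt_sub_reflPt (x y : EuclideanSpace ℝ (Fin N)) :
    reflPt ω lam x - reflPt ω lam y = reflPt ω 0 (x - y) := by
  simp only [reflPt, inner_sub_left]
  module

theorem dist_reflPt_reflPt (hω : ‖ω‖ = 1) (x y : EuclideanSpace ℝ (Fin N)) :
    dist (reflPt ω lam x) (reflPt ω lam y) = dist x y := by
  have hsq : ‖reflPt ω 0 (x - y)‖ ^ 2 = ‖x - y‖ ^ 2 := by
    rw [reflPt, norm_sub_smul_sq hω]
    ring
  rw [dist_eq_norm, dist_eq_norm, reflPt_sub_reflPt]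
  exact (pow_left_inj₀ (norm_nonneg _) (norm_nonneg _) two_ne_zero).mp hsq

theorem dist_reflPt_le (hω : ‖ω‖ = 1) {x y : EuclideanSpace ℝ (Fin N)}
    (hx : lam ≤ ⟪x, ω⟫) (hy : ⟪y, ω⟫ ≤ lam) : dist (reflPt ω lam x) y ≤ dist x y := by
  have hxy : reflPt ω lam x - y = (x - y) - (2 * (⟪x, ω⟫ - lam)) • ω := by
    rw [reflPt]
    module
  rw [dist_eq_norm, dist_eq_norm, hxy]
  refine norm_sub_smul_le_of_le_two_inner hω (by linarith) ?_
  rw [inner_sub_left]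
  linarith

theorem reflPt_mem_of_reflCap_subset (hω : ‖ω‖ = 1) {A : Set (EuclideanSpace ℝ (Fin N))}
    (hA : reflCap A ω lam ⊆ A) {a : EuclideanSpace ℝ (Fin N)} (ha : a ∈ A)
    (hlam : lam < ⟪a, ω⟫) : reflPt ω lam a ∈ A :=
  hA ⟨by rwa [reflPt_reflPt hω], by rwa [reflPt_reflPt hω]⟩

theorem reflCap_thickening_subset (hω : ‖ω‖ = 1) {A : Set (EuclideanSpace ℝ (Fin N))}
    (hA : reflCap A ω lam ⊆ A) (δ : ℝ) :
    reflCap (thickening δ A) ω lam ⊆ thickening δ A := by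
  rintro x ⟨hy, hlam⟩
  obtain ⟨a, ha, hya⟩ := mem_thickening_iff.mp hy
  rw [← reflPt_reflPt hω x]
  rcases le_or_gt ⟪a, ω⟫ lam with hleft | hright
  · exact mem_thickening_iff.mpr
      ⟨a, ha, (dist_reflPt_le hω hlam.le hleft).trans_lt hya⟩
  · exact mem_thickening_iff.mpr ⟨reflPt ω lam a, reflPt_mem_of_reflCap_subset hω hA ha hright,
      (dist_reflPt_reflPt hω _ a).trans_lt hya⟩

end Reflection

theorem reflCap_minkowski_general (N : ℕ)
    (G : Set (EuclideanSpace ℝ (Fin N)))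
    (R : ℝ)
    (Ω : Set (EuclideanSpace ℝ (Fin N))) (hΩ : Ω = G + ball (0 : EuclideanSpace ℝ (Fin N)) R)
    (ω : EuclideanSpace ℝ (Fin N)) (hω : ‖ω‖ = 1) (lam : ℝ)
    (h : reflCap G ω lam ⊆ G) :
    reflCap Ω ω lam ⊆ Ω := by
  rw [hΩ, add_ball_zero]
  exact reflCap_thickening_subset hω h R

/-- if the reflected cap of `G` is contained in `G`, then the reflected
cap of the Minkowski sum `Ω = G + B_R` is contained in `Ω`. -/
theorem reflCap_minkowski (N : ℕ)
    (G : Set (EuclideanSpace ℝ (Fin N)))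
    (hGopen : IsOpen G) (hGconn : IsConnected G) (hGbd : Bornology.IsBounded G)
    (R : ℝ) (hR : 0 < R)
    (Ω : Set (EuclideanSpace ℝ (Fin N))) (hΩ : Ω = G + ball (0 : EuclideanSpace ℝ (Fin N)) R)
    (ω : EuclideanSpace ℝ (Fin N)) (hω : ‖ω‖ = 1) (lam : ℝ)
    (h : reflCap G ω lam ⊆ G) :
    reflCap Ω ω lam ⊆ Ω :=
  reflCap_minkowski_general N G R Ω hΩ ω hω lam h
end
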